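/- With the above setup and assuming convergence of all deviation-matrix integrals, (I_p ⊗ 1₂ᵀ) D♯_{Q̃} (I_p ⊗ 1₂) = (I_p ⊗ 1₂ᵀ) D♯_{Q̄} (I_p ⊗ 1₂) = 2 D♯_G, where D♯_Q denotes the deviation matrix of generator Q. -/

import Mathlib

open Matrix MeasureTheory

/-- `Q` is a generator matrix of a finite CTMC: nonnegative off-diagonal entries
and zero row sums. -/
def IsGenerator {n : Type*} [Fintype n] (Q : Matrix n n ℝ) : Prop :=
  (∀ i j, i ≠ j → 0 ≤ Q i j) ∧ ∀ i, ∑ j, Q i j = 0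

/-- Irreducibility of the CTMC with generator `Q`: the transition matrix `e^Q`
is entrywise positive. -/
def IsIrreducibleGen {n : Type*} [Fintype n] [DecidableEq n] (Q : Matrix n n ℝ) : Prop :=
  ∀ i j, 0 < NormedSpace.exp Q i j

/-- `π` is a stationary distribution of the generator `Q`: `πQ = 0`, `π1 = 1`. -/
def IsStationaryDist {n : Type*} [Fintype n] (Q : Matrix n n ℝ) (π : n → ℝ) : Prop :=
  (∀ i, 0 ≤ π i) ∧ (∑ i, π i = 1) ∧ π ᵥ* Q = 0

/-- The rank-one matrix `1π`. -/
def onePi {n : Type*} (π : n → ℝ) : Matrix n n ℝ :=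
  Matrix.of fun _ j => π j

/-- `Ds` is the deviation matrix `D♯ = ∫₀^∞ (e^{Qu} − 1π) du` of `Q`
(entrywise convergent integral). -/
def IsDeviation {n : Type*} [Fintype n] [DecidableEq n] (Q : Matrix n n ℝ) (π : n → ℝ)
    (Ds : Matrix n n ℝ) : Prop :=
  ∀ i j, IntegrableOn (fun u => NormedSpace.exp (u • Q) i j - π j) (Set.Ioi (0:ℝ)) MeasureTheory.volume ∧
    Ds i j = ∫ u in Set.Ioi (0:ℝ), (NormedSpace.exp (u • Q) i j - π j)

/-- `Dt` is the transient deviation matrix `D♯(t) = ∫₀^t (e^{Qu} − 1π) du` of `Q`. -/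
def IsTransientDeviation {n : Type*} [Fintype n] [DecidableEq n] (Q : Matrix n n ℝ) (π : n → ℝ)
    (Dt : ℝ → Matrix n n ℝ) : Prop :=
  ∀ t i j, Dt t i j = ∫ u in Set.Ioc (0:ℝ) t, (NormedSpace.exp (u • Q) i j - π j)

/-- The `p × 2p` matrix `I_p ⊗ 1₂ᵀ`, where the `2p` index set is `Fin p × Fin 2`. -/
def kronA (p : ℕ) : Matrix (Fin p) (Fin p × Fin 2) ℝ :=
  Matrix.of fun i jk => if jk.1 = i then 1 else 0

/-- The slowness condition `λ_i > S_i = ∑_{j≠i} q_{ij} = -G i i` for a generator `G`. -/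
def IsSlow {p : ℕ} (G : Matrix (Fin p) (Fin p) ℝ) (lam : Fin p → ℝ) : Prop :=
  ∀ i, -G i i < lam i

/-- The `2p × 2p` generator `Q̄` of the MTCP associated with a slow MMPP with
modulating generator `G` and rates `λ`: diagonal `2×2` blocks
`[[−λ_i, λ_i − S_i],[λ_i − S_i, −λ_i]]` (note `λ_i − S_i = λ_i + G i i`) and
off-diagonal blocks `q_{ij} I₂`. -/
def Qbar {p : ℕ} (G : Matrix (Fin p) (Fin p) ℝ) (lam : Fin p → ℝ) :
    Matrix (Fin p × Fin 2) (Fin p × Fin 2) ℝ :=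
  Matrix.of fun ik jl =>
    if ik.1 = jl.1 then (if ik.2 = jl.2 then -lam ik.1 else lam ik.1 + G ik.1 ik.1)
    else (if ik.2 = jl.2 then G ik.1 jl.1 else 0)

/-- The `2p × 2p` generator `Q̃` of the coupled MAP built from the MMPP: diagonal
blocks `[[−(λ_i + S_i), λ_i],[λ_i, −(λ_i + S_i)]]` (note `−(λ_i+S_i) = G i i − λ_i`)
and off-diagonal blocks `q_{ij} I₂`. -/
def Qtil {p : ℕ} (G : Matrix (Fin p) (Fin p) ℝ) (lam : Fin p → ℝ) :
    Matrix (Fin p × Fin 2) (Fin p × Fin 2) ℝ :=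
  Matrix.of fun ik jl =>
    if ik.1 = jl.1 then (if ik.2 = jl.2 then G ik.1 ik.1 - lam ik.1 else lam ik.1)
    else (if ik.2 = jl.2 then G ik.1 jl.1 else 0)

/-- The event-intensity matrix `D̄ = Q̄ − diag(Q̄)` of the associated MTCP. -/
def Dbar {p : ℕ} (G : Matrix (Fin p) (Fin p) ℝ) (lam : Fin p → ℝ) :
    Matrix (Fin p × Fin 2) (Fin p × Fin 2) ℝ :=
  Qbar G lam - Matrix.diagonal fun ik => Qbar G lam ik ik

/-- The event-intensity matrix `D̃` of the coupled MMPP: block diagonal with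
blocks `[[0, λ_i],[λ_i, 0]]`. -/
def Dtil {p : ℕ} (lam : Fin p → ℝ) : Matrix (Fin p × Fin 2) (Fin p × Fin 2) ℝ :=
  Matrix.of fun ik jl => if ik.1 = jl.1 ∧ ik.2 ≠ jl.2 then lam ik.1 else 0

/-- The common stationary distribution `π = (1/2) ϑ (I_p ⊗ 1₂ᵀ)` of `Q̄` and `Q̃`. -/
noncomputable def piHat {p : ℕ} (θ : Fin p → ℝ) : Fin p × Fin 2 → ℝ :=
  (1/2 : ℝ) • (θ ᵥ* kronA p)

/-!
Both `Q̄` and `Q̃` have `2 × 2` blocks whose row sums are the entries of `G`, i.e.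
`(I_p ⊗ 1₂ᵀ) Q = G (I_p ⊗ 1₂ᵀ)`. This intertwining passes to `e^{uQ}`, and `π` sums over each
block to `ϑ`, so summing the integrand of `D♯_Q` over blocks gives twice the integrand of `D♯_G`.
-/

open NormedSpace
open scoped Nat

section Intertwining

attribute [local instance] Matrix.linftyOpNormedRing Matrix.linftyOpNormedAlgebra

variable {m n : Type*} [Fintype m] [Fintype n] [DecidableEq m] [DecidableEq n]

theorem Matrix.mul_pow_of_mul_eq {A : Matrix m n ℝ} {Q : Matrix n n ℝ} {G : Matrix m m ℝ}
    (h : A * Q = G * A) (k : ℕ) : A * Q ^ k = G ^ k * A := by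
  induction k with
  | zero => simp
  | succ k ih =>
    rw [pow_succ, ← Matrix.mul_assoc, ih, Matrix.mul_assoc, h, ← Matrix.mul_assoc, ← pow_succ]

theorem Matrix.mul_exp_of_mul_eq {A : Matrix m n ℝ} {Q : Matrix n n ℝ} {G : Matrix m m ℝ}
    (h : A * Q = G * A) : A * exp Q = exp G * A := by
  have hQ : HasSum (fun k => A * ((k ! : ℝ)⁻¹ • Q ^ k)) (A * exp Q) :=
    (exp_series_hasSum_exp' Q).map (AddMonoidHom.mk' (A * ·) (Matrix.mul_add A))
      (continuous_const.matrix_mul continuous_id)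
  have hG : HasSum (fun k => ((k ! : ℝ)⁻¹ • G ^ k) * A) (exp G * A) :=
    (exp_series_hasSum_exp' G).map (AddMonoidHom.mk' (· * A) fun M N => Matrix.add_mul M N A)
      (continuous_id.matrix_mul continuous_const)
  refine hQ.unique (hG.congr_fun fun k => ?_)
  rw [Matrix.mul_smul, Matrix.mul_pow_of_mul_eq h, Matrix.smul_mul]

end Intertwining

section KronA

variable {p : ℕ} {κ : Type*}

theorem kronA_mul_apply [Fintype κ] (M : Matrix (Fin p × Fin 2) κ ℝ) (i : Fin p) (c : κ) :
    (kronA p * M) i c = ∑ m, M (i, m) c := by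
  simp [Matrix.mul_apply, kronA, Fintype.sum_prod_type, Finset.sum_add_distrib]

theorem mul_kronA_apply (M : Matrix κ (Fin p) ℝ) (r : κ) (jl : Fin p × Fin 2) :
    (M * kronA p) r jl = M r jl.1 := by
  simp [Matrix.mul_apply, kronA]

theorem mul_kronA_transpose_apply (M : Matrix κ (Fin p × Fin 2) ℝ) (r : κ) (j : Fin p) :
    (M * (kronA p)ᵀ) r j = ∑ l, M r (j, l) := by
  simp [Matrix.mul_apply, kronA, Fintype.sum_prod_type, Finset.sum_add_distrib]

theorem kronA_mul_mul_kronA_transpose_apply (M : Matrix (Fin p × Fin 2) (Fin p × Fin 2) ℝ)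
    (i j : Fin p) : (kronA p * M * (kronA p)ᵀ) i j = ∑ l, ∑ m, M (i, m) (j, l) := by
  simp only [mul_kronA_transpose_apply, kronA_mul_apply]

theorem kronA_mul_eq_mul_kronA_iff {Q : Matrix (Fin p × Fin 2) (Fin p × Fin 2) ℝ}
    {G : Matrix (Fin p) (Fin p) ℝ} :
    kronA p * Q = G * kronA p ↔ ∀ i j l, ∑ m, Q (i, m) (j, l) = G i j := by
  simp only [← Matrix.ext_iff, Prod.forall, kronA_mul_apply, mul_kronA_apply]

theorem piHat_apply (θ : Fin p → ℝ) (jl : Fin p × Fin 2) : piHat θ jl = θ jl.1 / 2 := by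
  simp [piHat, Matrix.vecMul, dotProduct, kronA]
  ring

end KronA

theorem kronA_mul_Qbar {p : ℕ} (G : Matrix (Fin p) (Fin p) ℝ) (lam : Fin p → ℝ) :
    kronA p * Qbar G lam = G * kronA p := by
  refine kronA_mul_eq_mul_kronA_iff.2 fun i j l => ?_
  by_cases hij : i = j
  · subst hij; fin_cases l <;> simp [Qbar]
  · fin_cases l <;> simp [Qbar, hij]

theorem kronA_mul_Qtil {p : ℕ} (G : Matrix (Fin p) (Fin p) ℝ) (lam : Fin p → ℝ) :
    kronA p * Qtil G lam = G * kronA p := by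
  refine kronA_mul_eq_mul_kronA_iff.2 fun i j l => ?_
  by_cases hij : i = j
  · subst hij; fin_cases l <;> simp [Qtil]
  · fin_cases l <;> simp [Qtil, hij]

theorem kronA_mul_exp_smul {p : ℕ} {Q : Matrix (Fin p × Fin 2) (Fin p × Fin 2) ℝ}
    {G : Matrix (Fin p) (Fin p) ℝ} (hQ : kronA p * Q = G * kronA p) (u : ℝ) :
    kronA p * exp (u • Q) = exp (u • G) * kronA p :=
  Matrix.mul_exp_of_mul_eq (by rw [Matrix.mul_smul, hQ, Matrix.smul_mul])

theorem kronA_mul_deviation_mul_kronA_transpose {p : ℕ} {G : Matrix (Fin p) (Fin p) ℝ}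
    {Q : Matrix (Fin p × Fin 2) (Fin p × Fin 2) ℝ} (hQ : kronA p * Q = G * kronA p)
    {θ : Fin p → ℝ} {DsG : Matrix (Fin p) (Fin p) ℝ} (hDsG : IsDeviation G θ DsG)
    {Ds : Matrix (Fin p × Fin 2) (Fin p × Fin 2) ℝ} (hDs : IsDeviation Q (piHat θ) Ds) :
    kronA p * Ds * (kronA p)ᵀ = (2 : ℝ) • DsG := by
  ext i j
  have hintegrand (u : ℝ) :
      ∑ l, ∑ m, (exp (u • Q) (i, m) (j, l) - piHat θ (j, l)) = 2 * (exp (u • G) i j - θ j) := by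
    have hrow := kronA_mul_eq_mul_kronA_iff.1 (kronA_mul_exp_smul hQ u) i j
    simp only [Finset.sum_sub_distrib, hrow, piHat_apply, Fin.sum_univ_two]
    ring
  calc (kronA p * Ds * (kronA p)ᵀ) i j
      = ∑ l, ∑ m, ∫ u in Set.Ioi (0 : ℝ), (exp (u • Q) (i, m) (j, l) - piHat θ (j, l)) := by
        simp only [kronA_mul_mul_kronA_transpose_apply, (hDs _ _).2]
    _ = ∫ u in Set.Ioi (0 : ℝ), ∑ l, ∑ m, (exp (u • Q) (i, m) (j, l) - piHat θ (j, l)) := by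
        rw [integral_finsetSum _ fun l _ => integrable_finsetSum _ fun m _ => (hDs _ _).1]
        simp only [integral_finsetSum _ fun m _ => (hDs _ _).1]
    _ = 2 * ∫ u in Set.Ioi (0 : ℝ), (exp (u • G) i j - θ j) := by
        simp only [hintegrand, integral_const_mul]
    _ = ((2 : ℝ) • DsG) i j := by
        rw [Matrix.smul_apply, smul_eq_mul, (hDsG i j).2]

theorem stmt10_general {p : ℕ} (G : Matrix (Fin p) (Fin p) ℝ) (lam : Fin p → ℝ)
    (θ : Fin p → ℝ)
    (DsG : Matrix (Fin p) (Fin p) ℝ) (hDsG : IsDeviation G θ DsG)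
    (DsQb DsQt : Matrix (Fin p × Fin 2) (Fin p × Fin 2) ℝ)
    (hDsQb : IsDeviation (Qbar G lam) (piHat θ) DsQb)
    (hDsQt : IsDeviation (Qtil G lam) (piHat θ) DsQt) :
    kronA p * DsQt * (kronA p)ᵀ = (2 : ℝ) • DsG ∧
    kronA p * DsQb * (kronA p)ᵀ = (2 : ℝ) • DsG :=
  ⟨kronA_mul_deviation_mul_kronA_transpose (kronA_mul_Qtil G lam) hDsG hDsQt,
    kronA_mul_deviation_mul_kronA_transpose (kronA_mul_Qbar G lam) hDsG hDsQb⟩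

theorem stmt10 {p : ℕ} (G : Matrix (Fin p) (Fin p) ℝ) (lam : Fin p → ℝ)
    (hG : IsGenerator G) (hirr : IsIrreducibleGen G) (hslow : IsSlow G lam)
    (θ : Fin p → ℝ) (hθ : IsStationaryDist G θ)
    (DsG : Matrix (Fin p) (Fin p) ℝ) (hDsG : IsDeviation G θ DsG)
    (DsQb DsQt : Matrix (Fin p × Fin 2) (Fin p × Fin 2) ℝ)
    (hDsQb : IsDeviation (Qbar G lam) (piHat θ) DsQb)
    (hDsQt : IsDeviation (Qtil G lam) (piHat θ) DsQt) :
    kronA p * DsQt * (kronA p)ᵀ = (2 : ℝ) • DsG ∧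
    kronA p * DsQb * (kronA p)ᵀ = (2 : ℝ) • DsG :=
  stmt10_general G lam θ DsG hDsG DsQb DsQt hDsQb hDsQt
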